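/- Let a, b > 0, U(z) = tanh((b/a)z), and let H, γ, α ∈ ℝ. Set W²(z) = [H²·(a²·z/2 + α) + a·H·γ·z]·U'(z). Then ∫_ℝ U'(z)·(W²)'(z) dz = (a²·H²/4 + a·H·γ/2)·∫_ℝ U'(z)² dz. -/

import Mathlib

open Real Filter MeasureTheory Set Topology


private lemma my_hasDerivAt_tanh (x : ℝ) : HasDerivAt Real.tanh (1 - Real.tanh x ^ 2) x := by
  have h := (Real.hasDerivAt_sinh x).div (Real.hasDerivAt_cosh x) (Real.cosh_pos x).ne'
  have he : Real.tanh = fun y => Real.sinh y / Real.cosh y :=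
    funext fun y => Real.tanh_eq_sinh_div_cosh y
  rw [he]
  refine h.congr_deriv ?_
  have hc := (Real.cosh_pos x).ne'
  have hid := Real.cosh_sq_sub_sinh_sq x
  field_simp

private lemma my_sech_sq (x : ℝ) : 1 - Real.tanh x ^ 2 = 1 / Real.cosh x ^ 2 := by
  have hc := (Real.cosh_pos x).ne'
  have hid := Real.cosh_sq_sub_sinh_sq x
  rw [Real.tanh_eq_sinh_div_cosh]
  field_simp
  exact hid

private lemma my_tanh_sq_le_one (x : ℝ) : Real.tanh x ^ 2 ≤ 1 := by
  have h1 := my_sech_sq x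
  have h2 : 0 < 1 / Real.cosh x ^ 2 := by positivity
  linarith

private lemma my_cosh_ge (x : ℝ) : Real.exp |x| / 2 ≤ Real.cosh x := by
  rw [Real.cosh_eq]
  rcases abs_cases x with ⟨h, _⟩ | ⟨h, _⟩ <;> rw [h] <;>
    nlinarith [Real.exp_pos x, Real.exp_pos (-x)]

private lemma my_tanh_eq (x : ℝ) : Real.tanh x = 1 - 2 / (Real.exp (2 * x) + 1) := by
  rw [Real.tanh_eq_sinh_div_cosh, Real.sinh_eq, Real.cosh_eq]
  have h2 : Real.exp (2 * x) = Real.exp x * Real.exp x := by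
    rw [two_mul, Real.exp_add]
  have h3 : Real.exp (-x) = (Real.exp x)⁻¹ := Real.exp_neg x
  have h0 : (0:ℝ) < Real.exp x := Real.exp_pos x
  have h1 : (0:ℝ) < Real.exp (2*x) + 1 := by positivity
  rw [h2, h3]
  field_simp
  ring

private lemma my_tanh_atTop : Tendsto Real.tanh atTop (𝓝 1) := by
  have h1 : Tendsto (fun x : ℝ => Real.exp (2 * x) + 1) atTop atTop :=
    tendsto_atTop_add_const_right _ _
      (Real.tendsto_exp_atTop.comp (tendsto_id.const_mul_atTop two_pos))
  have h2 : Tendsto (fun x : ℝ => 2 / (Real.exp (2 * x) + 1)) atTop (𝓝 0) :=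
    tendsto_const_nhds.div_atTop h1
  have h3 : Tendsto (fun x : ℝ => 1 - 2 / (Real.exp (2 * x) + 1)) atTop (𝓝 (1 - 0)) :=
    tendsto_const_nhds.sub h2
  simp only [sub_zero] at h3
  exact h3.congr fun x => (my_tanh_eq x).symm

private lemma my_tanh_atBot : Tendsto Real.tanh atBot (𝓝 (-1)) := by
  have h := (my_tanh_atTop.comp tendsto_neg_atBot_atTop).neg
  simp only [Function.comp] at h
  have he : ∀ x : ℝ, -Real.tanh (-x) = Real.tanh x := fun x => by
    rw [Real.tanh_neg, neg_neg]
  simpa [he] using h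

private lemma my_int_exp_abs {c : ℝ} (hc : 0 < c) :
    Integrable fun x : ℝ => Real.exp (-(c * |x|)) := by
  have hbase : Integrable fun x : ℝ => Real.exp (-|x|) := by
    have h1 : IntegrableOn (fun x : ℝ => Real.exp (-|x|)) (Ioi 0) := by
      refine (exp_neg_integrableOn_Ioi 0 one_pos).congr_fun ?_ measurableSet_Ioi
      intro x hx
      show Real.exp (-1 * x) = Real.exp (-|x|)
      rw [abs_of_pos (mem_Ioi.mp hx)]
      ring_nf
    have h2 : IntegrableOn (fun x : ℝ => Real.exp (-|x|)) (Iic 0) := by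
      refine (integrableOn_exp_Iic 0).congr_fun ?_ measurableSet_Iic
      intro x hx
      show Real.exp x = Real.exp (-|x|)
      rw [abs_of_nonpos (mem_Iic.mp hx), neg_neg]
    have h := h2.union h1
    rwa [Iic_union_Ioi, integrableOn_univ] at h
  have h := hbase.comp_mul_left' hc.ne'
  refine h.congr (Eventually.of_forall fun x => ?_)
  show Real.exp (-|c * x|) = Real.exp (-(c * |x|))
  rw [abs_mul, abs_of_pos hc]


private lemma my_continuous_tanh : Continuous Real.tanh := by
  have he : Real.tanh = fun y => Real.sinh y / Real.cosh y :=
    funext fun y => Real.tanh_eq_sinh_div_cosh y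
  rw [he]
  exact Real.continuous_sinh.div Real.continuous_cosh fun x => (Real.cosh_pos x).ne'

private lemma my_s_nonneg (x : ℝ) : 0 ≤ 1 - Real.tanh x ^ 2 := by
  have := my_tanh_sq_le_one x; linarith

private lemma my_s_le_one (x : ℝ) : 1 - Real.tanh x ^ 2 ≤ 1 := by
  nlinarith [sq_nonneg (Real.tanh x)]

private lemma my_abs_tanh_le_one (x : ℝ) : |Real.tanh x| ≤ 1 := by
  nlinarith [my_tanh_sq_le_one x, sq_abs (Real.tanh x), abs_nonneg (Real.tanh x)]

private lemma my_s_le {c : ℝ} (hc : 0 < c) (z : ℝ) :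
    1 - Real.tanh (c * z) ^ 2 ≤ 4 * Real.exp (-(c * |z|)) ^ 2 := by
  have hx : |c * z| = c * |z| := by rw [abs_mul, abs_of_pos hc]
  have h1 : Real.exp (c * |z|) / 2 ≤ Real.cosh (c * z) := by
    have := my_cosh_ge (c * z); rwa [hx] at this
  have hE : Real.exp (-(c * |z|)) * Real.exp (c * |z|) = 1 := by
    rw [← Real.exp_add]; simp
  have hX : 0 < Real.exp (c * |z|) := Real.exp_pos _
  have hE0 : 0 < Real.exp (-(c * |z|)) := Real.exp_pos _
  have hC : 0 < Real.cosh (c * z) := Real.cosh_pos _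
  rw [my_sech_sq]
  rw [div_le_iff₀ (by positivity)]
  nlinarith [mul_le_mul_of_nonneg_left h1 hE0.le, sq_nonneg (Real.exp (-(c*|z|)) * Real.cosh (c*z) * 2 - 1)]

private lemma my_zE_le {c : ℝ} (hc : 0 < c) (z : ℝ) :
    c * |z| * Real.exp (-(c * |z|)) ≤ 1 := by
  have hE : Real.exp (-(c * |z|)) * Real.exp (c * |z|) = 1 := by
    rw [← Real.exp_add]; simp
  have h1 : c * |z| ≤ Real.exp (c * |z|) := by
    nlinarith [Real.add_one_le_exp (c * |z|)]
  have hE0 : 0 < Real.exp (-(c * |z|)) := Real.exp_pos _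
  nlinarith [mul_le_mul_of_nonneg_right h1 hE0.le]

private lemma my_E_le_one {c : ℝ} (hc : 0 < c) (z : ℝ) : Real.exp (-(c * |z|)) ≤ 1 := by
  rw [Real.exp_le_one_iff]
  have : 0 ≤ c * |z| := by positivity
  linarith

private lemma my_E_atTop {c : ℝ} (hc : 0 < c) :
    Tendsto (fun z : ℝ => Real.exp (-(c * |z|))) atTop (𝓝 0) := by
  have h : Tendsto (fun z : ℝ => Real.exp (-(c * z))) atTop (𝓝 0) :=
    Real.tendsto_exp_atBot.comp
      (tendsto_neg_atTop_atBot.comp (tendsto_id.const_mul_atTop hc))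
  refine h.congr' ?_
  filter_upwards [eventually_gt_atTop 0] with z hz
  rw [abs_of_pos hz]

private lemma my_E_atBot {c : ℝ} (hc : 0 < c) :
    Tendsto (fun z : ℝ => Real.exp (-(c * |z|))) atBot (𝓝 0) := by
  have h := (my_E_atTop hc).comp tendsto_neg_atBot_atTop
  refine h.congr fun z => ?_
  simp [Function.comp, abs_neg]

private lemma my_T_atTop {c : ℝ} (hc : 0 < c) :
    Tendsto (fun z : ℝ => Real.tanh (c * z)) atTop (𝓝 1) :=
  my_tanh_atTop.comp (tendsto_id.const_mul_atTop hc)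

private lemma my_T_atBot {c : ℝ} (hc : 0 < c) :
    Tendsto (fun z : ℝ => Real.tanh (c * z)) atBot (𝓝 (-1)) :=
  my_tanh_atBot.comp (tendsto_id.const_mul_atBot hc)

private lemma my_hasDerivAt_T {c : ℝ} (z : ℝ) :
    HasDerivAt (fun z : ℝ => Real.tanh (c * z))
      (c * (1 - Real.tanh (c * z) ^ 2)) z := by
  have h := (my_hasDerivAt_tanh (c * z)).comp z ((hasDerivAt_id z).const_mul c)
  refine h.congr_deriv ?_
  push_cast
  ring

private lemma my_hasDerivAt_V {c : ℝ} (z : ℝ) :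
    HasDerivAt (fun z : ℝ => c * (1 - Real.tanh (c * z) ^ 2))
      (-2 * c ^ 2 * Real.tanh (c * z) * (1 - Real.tanh (c * z) ^ 2)) z := by
  have h := (((my_hasDerivAt_T (c := c) z).pow 2).const_sub 1).const_mul c
  refine h.congr_deriv ?_
  push_cast
  ring


private lemma my_s2_le {c : ℝ} (hc : 0 < c) (z : ℝ) :
    (1 - Real.tanh (c * z) ^ 2) ^ 2 ≤ 4 * Real.exp (-(c * |z|)) ^ 2 := by
  have h1 := my_s_le hc z
  have h2 := my_s_le_one (c * z)
  have h0 := my_s_nonneg (c * z)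
  nlinarith [sq_nonneg (Real.exp (-(c * |z|)))]

private lemma my_E2_le {c : ℝ} (hc : 0 < c) (z : ℝ) :
    Real.exp (-(c * |z|)) ^ 2 ≤ Real.exp (-(c * |z|)) := by
  have h1 := my_E_le_one hc z
  have h2 := (Real.exp_pos (-(c * |z|))).le
  nlinarith

private lemma my_s2E_le {c : ℝ} (hc : 0 < c) (z : ℝ) :
    (1 - Real.tanh (c * z) ^ 2) ^ 2 ≤ 4 * Real.exp (-(c * |z|)) := by
  have := my_s2_le hc z
  have := my_E2_le hc z
  linarith

private lemma my_zs2_le {c : ℝ} (hc : 0 < c) (z : ℝ) :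
    c * |z| * (1 - Real.tanh (c * z) ^ 2) ^ 2 ≤ 4 * Real.exp (-(c * |z|)) := by
  have h1 := my_s2_le hc z
  have h2 := my_zE_le hc z
  have h3 := (Real.exp_pos (-(c * |z|))).le
  have h4 : 0 ≤ c * |z| := by positivity
  nlinarith [mul_le_mul_of_nonneg_left h1 h4,
    mul_le_mul_of_nonneg_right h2 h3]

private lemma my_cont_T {c : ℝ} : Continuous fun z : ℝ => Real.tanh (c * z) :=
  my_continuous_tanh.comp (continuous_const.mul continuous_id)

private lemma my_cont_V {c : ℝ} :
    Continuous fun z : ℝ => c * (1 - Real.tanh (c * z) ^ 2) :=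
  continuous_const.mul (continuous_const.sub (my_cont_T.pow 2))

/-- The RHS integral. -/
private lemma my_int_Vsq {c : ℝ} (hc : 0 < c) :
    ∫ z : ℝ, (c * (1 - Real.tanh (c * z) ^ 2)) ^ 2 = 4 * c / 3 := by
  have hbound : ∀ z : ℝ, ‖(c * (1 - Real.tanh (c * z) ^ 2)) ^ 2‖
      ≤ 4 * c ^ 2 * Real.exp (-(c * |z|)) := by
    intro z
    rw [Real.norm_eq_abs, abs_of_nonneg (by positivity)]
    have h1 := my_s2E_le hc z
    nlinarith [mul_le_mul_of_nonneg_left h1 (sq_nonneg c)]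
  have hint : Integrable fun z : ℝ => (c * (1 - Real.tanh (c * z) ^ 2)) ^ 2 := by
    refine Integrable.mono' ((my_int_exp_abs hc).const_mul (4 * c ^ 2))
      (my_cont_V.pow 2).aestronglyMeasurable (ae_of_all _ hbound)
  have hG : ∀ z : ℝ, HasDerivAt
      (fun z : ℝ => c * (Real.tanh (c * z) - Real.tanh (c * z) ^ 3 / 3))
      ((c * (1 - Real.tanh (c * z) ^ 2)) ^ 2) z := by
    intro z
    have h := ((my_hasDerivAt_T (c := c) z).sub
      (((my_hasDerivAt_T (c := c) z).pow 3).div_const 3)).const_mul c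
    refine h.congr_deriv ?_
    push_cast
    ring
  have hpoly : Continuous fun u : ℝ => c * (u - u ^ 3 / 3) := by
    exact continuous_const.mul (continuous_id.sub ((continuous_pow 3).div_const 3))
  have htop : Tendsto (fun z : ℝ => c * (Real.tanh (c * z) - Real.tanh (c * z) ^ 3 / 3))
      atTop (𝓝 (c * (1 - 1 ^ 3 / 3))) := by
    have h := (hpoly.tendsto 1).comp (my_T_atTop hc)
    simpa [Function.comp_def] using h
  have hbot : Tendsto (fun z : ℝ => c * (Real.tanh (c * z) - Real.tanh (c * z) ^ 3 / 3))
      atBot (𝓝 (c * (-1 - (-1) ^ 3 / 3))) := by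
    have h := (hpoly.tendsto (-1)).comp (my_T_atBot hc)
    simpa [Function.comp_def] using h
  have := integral_of_hasDerivAt_of_tendsto hG hint hbot htop
  rw [this]
  ring

private lemma my_bound2 {c : ℝ} (K M : ℝ) (hc : 0 < c) (z : ℝ) :
    |(K * z + M) * (c * (1 - Real.tanh (c * z) ^ 2)) ^ 2 / 2|
      ≤ (2 * c * |K| + 2 * c ^ 2 * |M|) * Real.exp (-(c * |z|)) := by
  have habs : |K * z + M| ≤ |K| * |z| + |M| := (abs_add_le _ _).trans (by rw [abs_mul])
  have e1 : |(K * z + M) * (c * (1 - Real.tanh (c * z) ^ 2)) ^ 2 / 2|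
      = |K * z + M| * ((c * (1 - Real.tanh (c * z) ^ 2)) ^ 2 / 2) := by
    rw [abs_div, abs_mul, abs_sq, abs_two]
    ring
  rw [e1]
  have h0 : (0:ℝ) ≤ (c * (1 - Real.tanh (c * z) ^ 2)) ^ 2 / 2 := by positivity
  have h1 := mul_le_mul_of_nonneg_right habs h0
  have v1 := mul_le_mul_of_nonneg_left (my_zs2_le hc z)
    (by positivity : (0:ℝ) ≤ |K| * (c / 2))
  have v2 := mul_le_mul_of_nonneg_left (my_s2E_le hc z)
    (by positivity : (0:ℝ) ≤ |M| * (c ^ 2 / 2))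
  nlinarith [h1, v1, v2]

/-- The LHS integral. -/
private lemma my_int_F {c : ℝ} (K M : ℝ) (hc : 0 < c) :
    ∫ z : ℝ, (c * (1 - Real.tanh (c * z) ^ 2)) *
      (K * (c * (1 - Real.tanh (c * z) ^ 2)) +
        (K * z + M) * (-2 * c ^ 2 * Real.tanh (c * z) * (1 - Real.tanh (c * z) ^ 2)))
      = 2 * K * c / 3 := by
  set E : ℝ → ℝ := fun z => Real.exp (-(c * |z|)) with hE
  have hc3 : (0:ℝ) ≤ 2 * c ^ 3 := by nlinarith [pow_pos hc 3]
  -- pointwise bound on the integrand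
  have hbound : ∀ z : ℝ, ‖(c * (1 - Real.tanh (c * z) ^ 2)) *
      (K * (c * (1 - Real.tanh (c * z) ^ 2)) +
        (K * z + M) * (-2 * c ^ 2 * Real.tanh (c * z) * (1 - Real.tanh (c * z) ^ 2)))‖
      ≤ (12 * c ^ 2 * |K| + 8 * c ^ 3 * |M|) * E z := by
    intro z
    set t := Real.tanh (c * z) with ht
    set s := 1 - t ^ 2 with hs
    have habs : |K * z + M| ≤ |K| * |z| + |M| := (abs_add_le _ _).trans (by rw [abs_mul])
    have ht1 : |t| ≤ 1 := my_abs_tanh_le_one (c * z)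
    have step1 : |(c * s) * (K * (c * s) + (K * z + M) * (-2 * c ^ 2 * t * s))|
        ≤ |K| * (c ^ 2 * s ^ 2) + (|K| * |z| + |M|) * (2 * c ^ 3) * s ^ 2 := by
      have e1 : (c * s) * (K * (c * s) + (K * z + M) * (-2 * c ^ 2 * t * s))
          = K * (c ^ 2 * s ^ 2) + ((K * z + M) * (-(2 * c ^ 3) * t)) * s ^ 2 := by ring
      rw [e1]
      refine (abs_add_le _ _).trans ?_
      have e2 : |K * (c ^ 2 * s ^ 2)| = |K| * (c ^ 2 * s ^ 2) := by
        rw [abs_mul, abs_of_nonneg (by positivity : (0:ℝ) ≤ c ^ 2 * s ^ 2)]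
      have e3 : |((K * z + M) * (-(2 * c ^ 3) * t)) * s ^ 2|
          = |K * z + M| * (2 * c ^ 3 * |t|) * s ^ 2 := by
        rw [abs_mul, abs_mul, abs_of_nonneg (sq_nonneg s), abs_mul, abs_neg,
          abs_of_nonneg hc3]
      rw [e2, e3]
      have h4 : |K * z + M| * (2 * c ^ 3 * |t|) ≤ (|K| * |z| + |M|) * (2 * c ^ 3) := by
        have h5 : 2 * c ^ 3 * |t| ≤ 2 * c ^ 3 := by
          nlinarith [mul_le_mul_of_nonneg_left ht1 hc3]
        exact mul_le_mul habs h5 (by positivity) (by positivity)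
      have h6 := mul_le_mul_of_nonneg_right h4 (sq_nonneg s)
      linarith
    have u1 := mul_le_mul_of_nonneg_left (my_s2E_le hc z)
      (by positivity : (0:ℝ) ≤ |K| * c ^ 2)
    have u2 := mul_le_mul_of_nonneg_left (my_zs2_le hc z)
      (by positivity : (0:ℝ) ≤ 2 * c ^ 2 * |K|)
    have u3 := mul_le_mul_of_nonneg_left (my_s2E_le hc z)
      (mul_nonneg (by nlinarith [pow_pos hc 3]) (abs_nonneg M) : (0:ℝ) ≤ 2 * c ^ 3 * |M|)
    rw [Real.norm_eq_abs]
    calc |(c * s) * (K * (c * s) + (K * z + M) * (-2 * c ^ 2 * t * s))|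
        ≤ |K| * (c ^ 2 * s ^ 2) + (|K| * |z| + |M|) * (2 * c ^ 3) * s ^ 2 := step1
      _ ≤ (12 * c ^ 2 * |K| + 8 * c ^ 3 * |M|) * E z := by
          simp only [hE]
          simp only [← ht, ← hs] at u1 u2 u3
          linarith [u1, u2, u3]
  -- continuity
  have hcont : Continuous fun z : ℝ => (c * (1 - Real.tanh (c * z) ^ 2)) *
      (K * (c * (1 - Real.tanh (c * z) ^ 2)) +
        (K * z + M) * (-2 * c ^ 2 * Real.tanh (c * z) * (1 - Real.tanh (c * z) ^ 2))) := by
    refine my_cont_V.mul (Continuous.add (continuous_const.mul my_cont_V) ?_)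
    refine Continuous.mul ((continuous_const.mul continuous_id).add continuous_const) ?_
    exact (continuous_const.mul my_cont_T).mul (continuous_const.sub (my_cont_T.pow 2))
  have hint : Integrable fun z : ℝ => (c * (1 - Real.tanh (c * z) ^ 2)) *
      (K * (c * (1 - Real.tanh (c * z) ^ 2)) +
        (K * z + M) * (-2 * c ^ 2 * Real.tanh (c * z) * (1 - Real.tanh (c * z) ^ 2))) :=
    Integrable.mono' ((my_int_exp_abs hc).const_mul (12 * c ^ 2 * |K| + 8 * c ^ 3 * |M|))
      hcont.aestronglyMeasurable (ae_of_all _ hbound)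
  -- antiderivative
  have hG : ∀ z : ℝ, HasDerivAt
      (fun z : ℝ => K * c / 2 * (Real.tanh (c * z) - Real.tanh (c * z) ^ 3 / 3)
        + (K * z + M) * (c * (1 - Real.tanh (c * z) ^ 2)) ^ 2 / 2)
      ((c * (1 - Real.tanh (c * z) ^ 2)) *
        (K * (c * (1 - Real.tanh (c * z) ^ 2)) +
          (K * z + M) * (-2 * c ^ 2 * Real.tanh (c * z) * (1 - Real.tanh (c * z) ^ 2)))) z := by
    intro z
    have h1 := ((my_hasDerivAt_T (c := c) z).sub
      (((my_hasDerivAt_T (c := c) z).pow 3).div_const 3)).const_mul (K * c / 2)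
    have hQ : HasDerivAt (fun z : ℝ => K * z + M) K z := by
      simpa using ((hasDerivAt_id z).const_mul K).add_const M
    have h2 := (hQ.mul ((my_hasDerivAt_V (c := c) z).pow 2)).div_const 2
    have h := h1.add h2
    refine h.congr_deriv ?_
    push_cast
    simp only [Pi.pow_apply]
    ring
  -- limits of the antiderivative
  have hsq_top : Tendsto (fun z : ℝ => (K * z + M) * (c * (1 - Real.tanh (c * z) ^ 2)) ^ 2 / 2)
      atTop (𝓝 0) := by
    refine squeeze_zero_norm (a := fun z => (2 * c * |K| + 2 * c ^ 2 * |M|) * E z)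
      (fun z => my_bound2 K M hc z) ?_
    have h := (my_E_atTop hc).const_mul (2 * c * |K| + 2 * c ^ 2 * |M|)
    simpa using h
  have hsq_bot : Tendsto (fun z : ℝ => (K * z + M) * (c * (1 - Real.tanh (c * z) ^ 2)) ^ 2 / 2)
      atBot (𝓝 0) := by
    refine squeeze_zero_norm (a := fun z => (2 * c * |K| + 2 * c ^ 2 * |M|) * E z)
      (fun z => my_bound2 K M hc z) ?_
    have h := (my_E_atBot hc).const_mul (2 * c * |K| + 2 * c ^ 2 * |M|)
    simpa using h
  have hpoly : Continuous fun u : ℝ => K * c / 2 * (u - u ^ 3 / 3) :=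
    continuous_const.mul (continuous_id.sub ((continuous_pow 3).div_const 3))
  have htop : Tendsto (fun z : ℝ => K * c / 2 * (Real.tanh (c * z) - Real.tanh (c * z) ^ 3 / 3)
        + (K * z + M) * (c * (1 - Real.tanh (c * z) ^ 2)) ^ 2 / 2)
      atTop (𝓝 (K * c / 2 * (1 - 1 ^ 3 / 3) + 0)) := by
    refine Tendsto.add ?_ hsq_top
    have h := (hpoly.tendsto 1).comp (my_T_atTop hc)
    simpa [Function.comp_def] using h
  have hbot : Tendsto (fun z : ℝ => K * c / 2 * (Real.tanh (c * z) - Real.tanh (c * z) ^ 3 / 3)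
        + (K * z + M) * (c * (1 - Real.tanh (c * z) ^ 2)) ^ 2 / 2)
      atBot (𝓝 (K * c / 2 * (-1 - (-1) ^ 3 / 3) + 0)) := by
    refine Tendsto.add ?_ hsq_bot
    have h := (hpoly.tendsto (-1)).comp (my_T_atBot hc)
    simpa [Function.comp_def] using h
  have hres := integral_of_hasDerivAt_of_tendsto hG hint hbot htop
  rw [hres]
  ring

/-- For `a, b > 0`, `U(z) = tanh((b/a)z)`, and reals `H, γ, α`, with
`W²(z) = [H²(a²z/2 + α) + aHγz] U'(z)`, one has
`∫ U' (W²)' dz = (a²H²/4 + aHγ/2) ∫ U'² dz`. -/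
theorem stmt_16 (a b H γ α : ℝ) (ha : 0 < a) (hb : 0 < b)
    (U W2 : ℝ → ℝ)
    (hU : U = fun z => Real.tanh ((b / a) * z))
    (hW2 : W2 = fun z => (H ^ 2 * (a ^ 2 * z / 2 + α) + a * H * γ * z) * deriv U z) :
    ∫ z : ℝ, deriv U z * deriv W2 z
      = (a ^ 2 * H ^ 2 / 4 + a * H * γ / 2) * ∫ z : ℝ, (deriv U z) ^ 2 := by
  subst hU
  subst hW2
  set c : ℝ := b / a with hcdef
  have hc : 0 < c := div_pos hb ha
  have hQd : ∀ z : ℝ, HasDerivAt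
      (fun w : ℝ => H ^ 2 * (a ^ 2 * w / 2 + α) + a * H * γ * w)
      (H ^ 2 * a ^ 2 / 2 + a * H * γ) z := by
    intro z
    have he : (fun w : ℝ => H ^ 2 * (a ^ 2 * w / 2 + α) + a * H * γ * w)
        = fun w : ℝ => (H ^ 2 * a ^ 2 / 2 + a * H * γ) * w + H ^ 2 * α := by
      funext w; ring
    rw [he]
    simpa using ((hasDerivAt_id z).const_mul (H ^ 2 * a ^ 2 / 2 + a * H * γ)).add_const
      (H ^ 2 * α)
  have hW2eq : (fun w : ℝ => (H ^ 2 * (a ^ 2 * w / 2 + α) + a * H * γ * w) *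
        deriv (fun y : ℝ => Real.tanh (c * y)) w)
      = fun w : ℝ => (H ^ 2 * (a ^ 2 * w / 2 + α) + a * H * γ * w) *
        (c * (1 - Real.tanh (c * w) ^ 2)) :=
    funext fun w => by rw [(my_hasDerivAt_T (c := c) w).deriv]
  have hd2 : ∀ z : ℝ, deriv (fun w : ℝ => (H ^ 2 * (a ^ 2 * w / 2 + α) + a * H * γ * w) *
        (c * (1 - Real.tanh (c * w) ^ 2))) z
      = (H ^ 2 * a ^ 2 / 2 + a * H * γ) * (c * (1 - Real.tanh (c * z) ^ 2))
        + (H ^ 2 * (a ^ 2 * z / 2 + α) + a * H * γ * z) *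
          (-2 * c ^ 2 * Real.tanh (c * z) * (1 - Real.tanh (c * z) ^ 2)) := fun z =>
    HasDerivAt.deriv (by exact (hQd z).mul (my_hasDerivAt_V (c := c) z))
  have key : (fun z : ℝ => deriv (fun z : ℝ => Real.tanh (c * z)) z *
        deriv (fun z : ℝ => (H ^ 2 * (a ^ 2 * z / 2 + α) + a * H * γ * z) *
          deriv (fun z : ℝ => Real.tanh (c * z)) z) z)
      = fun z : ℝ => (c * (1 - Real.tanh (c * z) ^ 2)) *
          ((H ^ 2 * a ^ 2 / 2 + a * H * γ) * (c * (1 - Real.tanh (c * z) ^ 2)) +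
            ((H ^ 2 * a ^ 2 / 2 + a * H * γ) * z + H ^ 2 * α) *
              (-2 * c ^ 2 * Real.tanh (c * z) * (1 - Real.tanh (c * z) ^ 2))) := by
    funext z
    rw [hW2eq, (my_hasDerivAt_T (c := c) z).deriv, hd2 z]
    ring
  have key2 : (fun z : ℝ => (deriv (fun z : ℝ => Real.tanh (c * z)) z) ^ 2)
      = fun z : ℝ => (c * (1 - Real.tanh (c * z) ^ 2)) ^ 2 :=
    funext fun z => by rw [(my_hasDerivAt_T (c := c) z).deriv]
  rw [key, key2, my_int_F (H ^ 2 * a ^ 2 / 2 + a * H * γ) (H ^ 2 * α) hc, my_int_Vsq hc]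
  ring
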